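/- Let μ ∈ ℝ^d, let Σ be symmetric positive definite, and let S ⊆ ℝ^d be measurable with N(μ,Σ;S) ≥ α for some α ∈ (0,1]. Then the mean μ_S of the truncated normal N(μ,Σ,S) satisfies ‖μ_S − μ‖_Σ ≤ √(2 log(1/α)) + 1. -/

import Mathlib

/-!
For every direction `w`, Jensen's inequality and the fact that conditioning on `S` multiplies
densities by at most `1/α` give
`exp (w ⬝ (μ_S - μ)) ≤ E_{N(μ,Σ,S)} exp (w ⬝ (x - μ)) ≤ α⁻¹ E_{N(μ,Σ)} exp (w ⬝ (x - μ))`,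
and the right-hand side is `α⁻¹ exp (wᵀ Σ w / 2)`.
For `w = Σ⁻¹ (μ_S - μ)` this reads `‖μ_S - μ‖²_Σ / 2 ≤ log (1/α)`.
The Gaussian moment generating function comes from completing the square and the substitution
`x = μ + Bᵀ y`, where `Σ = Bᵀ B`.
-/

open MeasureTheory ProbabilityTheory Matrix Real

noncomputable section

/-- Euclidean norm of a vector in `ℝ^d`. -/
def vnorm {d : ℕ} (x : Fin d → ℝ) : ℝ := Real.sqrt (∑ i, x i ^ 2)

/-- Frobenius norm of a `d × d` real matrix. -/
def fnorm {d : ℕ} (A : Matrix (Fin d) (Fin d) ℝ) : ℝ := Real.sqrt (∑ i, ∑ j, A i j ^ 2)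

/-- Density of the `d`-variate normal distribution `N(μ, Σ)`. -/
def gpdf {d : ℕ} (μ : Fin d → ℝ) (Sg : Matrix (Fin d) (Fin d) ℝ) (x : Fin d → ℝ) : ℝ :=
  (Real.sqrt ((2 * Real.pi) ^ d * Sg.det))⁻¹ *
    Real.exp (-(1 / 2) * ((x - μ) ⬝ᵥ (Sg⁻¹ *ᵥ (x - μ))))

/-- The `d`-variate normal distribution `N(μ, Σ)` as a measure on `ℝ^d`. -/
def gauss {d : ℕ} (μ : Fin d → ℝ) (Sg : Matrix (Fin d) (Fin d) ℝ) : Measure (Fin d → ℝ) :=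
  volume.withDensity fun x => ENNReal.ofReal (gpdf μ Sg x)

/-- The `S`-truncated normal distribution `N(μ, Σ, S)`: the normal `N(μ, Σ)`
conditioned on taking values in `S`. -/
def truncGauss {d : ℕ} (μ : Fin d → ℝ) (Sg : Matrix (Fin d) (Fin d) ℝ)
    (S : Set (Fin d → ℝ)) : Measure (Fin d → ℝ) :=
  ProbabilityTheory.cond (gauss μ Sg) S

/-- Mean vector of a measure on `ℝ^d`. -/
def meanv {d : ℕ} (P : Measure (Fin d → ℝ)) : Fin d → ℝ := fun i => ∫ x, x i ∂P

/-- Covariance matrix of a measure on `ℝ^d`. -/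
def covm {d : ℕ} (P : Measure (Fin d → ℝ)) : Matrix (Fin d) (Fin d) ℝ :=
  Matrix.of fun i j => ∫ x, (x i - meanv P i) * (x j - meanv P j) ∂P

section LinearAlgebra

variable {ι : Type*} [Fintype ι] [DecidableEq ι]

open scoped MatrixOrder in
lemma Matrix.PosSemidef.exists_eq_transpose_mul_self {A : Matrix ι ι ℝ} (hA : A.PosSemidef) :
    ∃ B : Matrix ι ι ℝ, A = Bᵀ * B := by
  obtain ⟨B, rfl⟩ := CStarAlgebra.nonneg_iff_eq_star_mul_self.mp hA.nonneg
  exact ⟨B, by simp [star_eq_conjTranspose]⟩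

lemma transpose_mulVec_dotProduct_inv_mulVec {B : Matrix ι ι ℝ} (hB : IsUnit B.det)
    (y : ι → ℝ) : (Bᵀ *ᵥ y) ⬝ᵥ ((Bᵀ * B)⁻¹ *ᵥ (Bᵀ *ᵥ y)) = y ⬝ᵥ y := by
  have hBt : IsUnit Bᵀ.det := by rwa [det_transpose]
  rw [Matrix.mul_inv_rev, ← mulVec_mulVec, mulVec_mulVec y, nonsing_inv_mul _ hBt, one_mulVec,
    mulVec_transpose, ← dotProduct_mulVec, mulVec_mulVec, mul_nonsing_inv _ hB, one_mulVec]

lemma dotProduct_inv_mulVec_le_of_forall_dotProduct_le {A : Matrix ι ι ℝ} (hA : IsUnit A.det)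
    {ν : ι → ℝ} {L : ℝ} (h : ∀ w, w ⬝ᵥ ν ≤ w ⬝ᵥ (A *ᵥ w) / 2 + L) :
    ν ⬝ᵥ (A⁻¹ *ᵥ ν) ≤ 2 * L := by
  have hν : A *ᵥ (A⁻¹ *ᵥ ν) = ν := by rw [mulVec_mulVec, mul_nonsing_inv _ hA, one_mulVec]
  have := h (A⁻¹ *ᵥ ν)
  rw [hν, dotProduct_comm] at this
  linarith

end LinearAlgebra

section ChangeOfVariables

variable {ι : Type*} [Fintype ι] [DecidableEq ι] {B : Matrix ι ι ℝ}

lemma map_toLin'_volume (hB : B.det ≠ 0) :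
    Measure.map (toLin' B) volume = ENNReal.ofReal |B.det|⁻¹ • volume := by
  rw [Real.map_matrix_volume_pi_eq_smul_volume_pi hB, abs_inv]

lemma measurableEmbedding_toLin' (hB : B.det ≠ 0) : MeasurableEmbedding (toLin' B) :=
  (toLinearEquiv' B (invertibleOfIsUnitDet B hB.isUnit)).toContinuousLinearEquiv.toHomeomorph
    |>.measurableEmbedding

lemma integrable_comp_mulVec_iff (hB : B.det ≠ 0) {f : (ι → ℝ) → ℝ} :
    Integrable (fun y => f (B *ᵥ y)) ↔ Integrable f := by
  have h := (measurableEmbedding_toLin' hB).integrable_map_iff (μ := volume) (g := f)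
  rw [map_toLin'_volume hB, integrable_smul_measure (by simpa using hB) ENNReal.ofReal_ne_top] at h
  exact h.symm

lemma integral_comp_mulVec (hB : B.det ≠ 0) (f : (ι → ℝ) → ℝ) :
    ∫ y, f (B *ᵥ y) = |B.det|⁻¹ * ∫ x, f x := by
  have h := (measurableEmbedding_toLin' hB).integral_map (μ := volume) f
  rw [map_toLin'_volume hB, integral_smul_measure, ENNReal.toReal_ofReal (by positivity)] at h
  exact h.symm

end ChangeOfVariables

section StandardGaussianIntegral

variable {ι : Type*} [Fintype ι]

lemma exp_neg_dotProduct_self_div_two (y : ι → ℝ) :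
    exp (-(y ⬝ᵥ y) / 2) = ∏ i, exp (-(1 / 2) * y i ^ 2) := by
  rw [← exp_sum]
  simp only [dotProduct, ← Finset.sum_neg_distrib, Finset.sum_div]
  congr 1
  exact Finset.sum_congr rfl fun i _ => by ring

lemma integrable_exp_neg_dotProduct_self_div_two :
    Integrable fun y : ι → ℝ => exp (-(y ⬝ᵥ y) / 2) := by
  simp only [exp_neg_dotProduct_self_div_two]
  exact Integrable.fintype_prod (f := fun _ t => exp (-(1 / 2) * t ^ 2))
    fun _ => integrable_exp_neg_mul_sq (by norm_num)

lemma integral_exp_neg_dotProduct_self_div_two :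
    ∫ y : ι → ℝ, exp (-(y ⬝ᵥ y) / 2) = √(2 * π) ^ Fintype.card ι := by
  simp only [exp_neg_dotProduct_self_div_two]
  rw [integral_fintype_prod_volume_eq_prod (fun _ t => exp (-(1 / 2) * t ^ 2)), integral_gaussian,
    Finset.prod_const, Finset.card_univ]
  norm_num [div_div_eq_mul_div, mul_comm]

end StandardGaussianIntegral

section Density

variable {d : ℕ} (μ : Fin d → ℝ) (Sg : Matrix (Fin d) (Fin d) ℝ)

lemma gpdf_nonneg (x : Fin d → ℝ) : 0 ≤ gpdf μ Sg x := by
  unfold gpdf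
  positivity

lemma continuous_gpdf : Continuous (gpdf μ Sg) := by
  unfold gpdf
  fun_prop

lemma gpdf_eq_gpdf_zero_sub (x : Fin d → ℝ) : gpdf μ Sg x = gpdf 0 Sg (x - μ) := by
  simp [gpdf]

lemma gpdf_zero_transpose_mul_self_transpose_mulVec {B : Matrix (Fin d) (Fin d) ℝ}
    (hB : IsUnit B.det) (y : Fin d → ℝ) :
    gpdf 0 (Bᵀ * B) (Bᵀ *ᵥ y) = (|B.det| * √(2 * π) ^ d)⁻¹ * exp (-(y ⬝ᵥ y) / 2) := by
  have hpow : √((2 * π) ^ d) = √(2 * π) ^ d := by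
    rw [← sqrt_sq (by positivity : 0 ≤ √(2 * π) ^ d), ← pow_mul, mul_comm d 2, pow_mul,
      sq_sqrt (by positivity)]
  have hconst : √((2 * π) ^ d * (Bᵀ * B).det) = |B.det| * √(2 * π) ^ d := by
    rw [det_mul, det_transpose, ← sq, mul_comm, sqrt_mul (sq_nonneg _), sqrt_sq_eq_abs, hpow]
  rw [gpdf, sub_zero, transpose_mulVec_dotProduct_inv_mulVec hB, hconst]
  ring_nf

lemma integrable_gpdf_zero_transpose_mul_self {B : Matrix (Fin d) (Fin d) ℝ} (hB : B.det ≠ 0) :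
    Integrable (gpdf 0 (Bᵀ * B)) := by
  have hBt : Bᵀ.det ≠ 0 := by rwa [det_transpose]
  rw [← integrable_comp_mulVec_iff hBt]
  simp only [gpdf_zero_transpose_mul_self_transpose_mulVec hB.isUnit]
  exact integrable_exp_neg_dotProduct_self_div_two.const_mul _

lemma integral_gpdf_zero_transpose_mul_self {B : Matrix (Fin d) (Fin d) ℝ} (hB : B.det ≠ 0) :
    ∫ x, gpdf 0 (Bᵀ * B) x = 1 := by
  have hBt : Bᵀ.det ≠ 0 := by rwa [det_transpose]
  have h := integral_comp_mulVec hBt (gpdf 0 (Bᵀ * B))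
  simp only [gpdf_zero_transpose_mul_self_transpose_mulVec hB.isUnit, integral_const_mul,
    integral_exp_neg_dotProduct_self_div_two, Fintype.card_fin, det_transpose] at h
  have hpos : 0 < |B.det| := abs_pos.mpr hB
  field_simp at h
  linarith

variable {Sg}

lemma integrable_gpdf (hSg : Sg.PosDef) : Integrable (gpdf μ Sg) := by
  obtain ⟨B, rfl⟩ := hSg.posSemidef.exists_eq_transpose_mul_self
  have hB : B.det ≠ 0 := fun h => by simpa [h] using hSg.det_pos
  rw [show gpdf μ (Bᵀ * B) = fun x => gpdf 0 (Bᵀ * B) (x - μ) from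
    funext (gpdf_eq_gpdf_zero_sub μ _)]
  exact (integrable_gpdf_zero_transpose_mul_self hB).comp_sub_right μ

lemma integral_gpdf (hSg : Sg.PosDef) : ∫ x, gpdf μ Sg x = 1 := by
  obtain ⟨B, rfl⟩ := hSg.posSemidef.exists_eq_transpose_mul_self
  have hB : B.det ≠ 0 := fun h => by simpa [h] using hSg.det_pos
  simp only [gpdf_eq_gpdf_zero_sub μ]
  rw [integral_sub_right_eq_self (gpdf 0 (Bᵀ * B)) μ, integral_gpdf_zero_transpose_mul_self hB]

lemma gpdf_mul_exp_dotProduct_sub (hSg : Sg.PosDef) (w x : Fin d → ℝ) :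
    gpdf μ Sg x * exp (w ⬝ᵥ (x - μ)) =
      exp (w ⬝ᵥ (Sg *ᵥ w) / 2) * gpdf (μ + Sg *ᵥ w) Sg x := by
  have hu : Sg⁻¹ *ᵥ (Sg *ᵥ w) = w := by
    rw [mulVec_mulVec, nonsing_inv_mul _ hSg.det_pos.ne'.isUnit, one_mulVec]
  have hsymm : (Sg *ᵥ w) ᵥ* Sg⁻¹ = w := by
    rw [← mulVec_transpose, ← conjTranspose_eq_transpose_of_trivial, hSg.inv.isHermitian.eq, hu]
  have hsquare : (x - (μ + Sg *ᵥ w)) ⬝ᵥ (Sg⁻¹ *ᵥ (x - (μ + Sg *ᵥ w))) =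
      (x - μ) ⬝ᵥ (Sg⁻¹ *ᵥ (x - μ)) - 2 * (w ⬝ᵥ (x - μ)) + w ⬝ᵥ (Sg *ᵥ w) := by
    rw [show x - (μ + Sg *ᵥ w) = x - μ - Sg *ᵥ w by abel, mulVec_sub, sub_dotProduct,
      dotProduct_sub, dotProduct_sub, hu, dotProduct_mulVec (Sg *ᵥ w), hsymm,
      dotProduct_comm (x - μ) w, dotProduct_comm (Sg *ᵥ w) w]
    ring
  rw [gpdf, gpdf, hsquare, mul_assoc, mul_left_comm (exp _), ← exp_add, ← exp_add]
  ring_nf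

end Density

section Gauss

variable {d : ℕ} (μ : Fin d → ℝ) {Sg : Matrix (Fin d) (Fin d) ℝ}

lemma measurable_ofReal_gpdf (Sg : Matrix (Fin d) (Fin d) ℝ) :
    Measurable fun x => ENNReal.ofReal (gpdf μ Sg x) :=
  (continuous_gpdf μ Sg).measurable.ennreal_ofReal

lemma integrable_gauss_iff (Sg : Matrix (Fin d) (Fin d) ℝ) {g : (Fin d → ℝ) → ℝ} :
    Integrable g (gauss μ Sg) ↔ Integrable fun x => gpdf μ Sg x * g x := by
  rw [gauss, integrable_withDensity_iff_integrable_smul' (measurable_ofReal_gpdf μ Sg)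
    (.of_forall fun _ => ENNReal.ofReal_lt_top)]
  simp only [ENNReal.toReal_ofReal (gpdf_nonneg μ Sg _), smul_eq_mul]

lemma integral_gauss (Sg : Matrix (Fin d) (Fin d) ℝ) (g : (Fin d → ℝ) → ℝ) :
    ∫ x, g x ∂gauss μ Sg = ∫ x, gpdf μ Sg x * g x := by
  rw [gauss, integral_withDensity_eq_integral_toReal_smul (measurable_ofReal_gpdf μ Sg)
    (.of_forall fun _ => ENNReal.ofReal_lt_top)]
  simp only [ENNReal.toReal_ofReal (gpdf_nonneg μ Sg _), smul_eq_mul]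

lemma isProbabilityMeasure_gauss (hSg : Sg.PosDef) : IsProbabilityMeasure (gauss μ Sg) := by
  constructor
  rw [gauss, withDensity_apply _ MeasurableSet.univ, Measure.restrict_univ,
    ← ofReal_integral_eq_lintegral_ofReal (integrable_gpdf μ hSg)
      (.of_forall (gpdf_nonneg μ Sg)), integral_gpdf μ hSg, ENNReal.ofReal_one]

lemma integrable_exp_dotProduct_sub_gauss (hSg : Sg.PosDef) (w : Fin d → ℝ) :
    Integrable (fun x => exp (w ⬝ᵥ (x - μ))) (gauss μ Sg) := by
  rw [integrable_gauss_iff]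
  simp only [gpdf_mul_exp_dotProduct_sub μ hSg w]
  exact (integrable_gpdf _ hSg).const_mul _

lemma integral_exp_dotProduct_sub_gauss (hSg : Sg.PosDef) (w : Fin d → ℝ) :
    ∫ x, exp (w ⬝ᵥ (x - μ)) ∂gauss μ Sg = exp (w ⬝ᵥ (Sg *ᵥ w) / 2) := by
  simp only [integral_gauss, gpdf_mul_exp_dotProduct_sub μ hSg w, integral_const_mul,
    integral_gpdf _ hSg, mul_one]

end Gauss

section Conditioning

variable {Ω : Type*} [MeasurableSpace Ω] {P : Measure Ω} {S : Set Ω} {α : ℝ}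

lemma MeasureTheory.Integrable.cond {f : Ω → ℝ} (hf : Integrable f P) (hPS : P S ≠ 0) :
    Integrable f P[|S] :=
  hf.restrict.smul_measure (ENNReal.inv_ne_top.mpr hPS)

variable [IsFiniteMeasure P]

lemma integral_cond_le_inv_mul_integral (hα : 0 < α) (hmass : ENNReal.ofReal α ≤ P S)
    {f : Ω → ℝ} (hf : Integrable f P) (hf0 : 0 ≤ f) :
    ∫ x, f x ∂P[|S] ≤ α⁻¹ * ∫ x, f x ∂P := by
  have hαPS : α ≤ (P S).toReal := by
    simpa [ENNReal.toReal_ofReal hα.le] using ENNReal.toReal_mono (measure_ne_top P S) hmass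
  rw [ProbabilityTheory.cond, integral_smul_measure, ENNReal.toReal_inv, smul_eq_mul]
  gcongr
  · exact integral_nonneg hf0
  · exact .of_forall hf0
  · exact Measure.restrict_le_self

lemma exp_integral_cond_le (hα : 0 < α) (hmass : ENNReal.ofReal α ≤ P S) {Z : Ω → ℝ}
    (hZ : Integrable Z P[|S]) (hexp : Integrable (fun x => exp (Z x)) P) :
    exp (∫ x, Z x ∂P[|S]) ≤ α⁻¹ * ∫ x, exp (Z x) ∂P := by
  have hPS : P S ≠ 0 := (lt_of_lt_of_le (ENNReal.ofReal_pos.mpr hα) hmass).ne'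
  have := cond_isProbabilityMeasure (μ := P) hPS
  calc exp (∫ x, Z x ∂P[|S]) ≤ ∫ x, exp (Z x) ∂P[|S] :=
        convexOn_exp.map_integral_le continuous_exp.continuousOn isClosed_univ
          (.of_forall fun _ => Set.mem_univ _) hZ (hexp.cond hPS)
    _ ≤ α⁻¹ * ∫ x, exp (Z x) ∂P :=
        integral_cond_le_inv_mul_integral hα hmass hexp fun _ => (exp_pos _).le

end Conditioning

section TruncGauss

variable {d : ℕ}

lemma integral_dotProduct_sub_eq_dotProduct_meanv_sub {Q : Measure (Fin d → ℝ)}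
    [IsProbabilityMeasure Q] (hQ : ∀ i, Integrable (fun x => x i) Q) (w c : Fin d → ℝ) :
    ∫ x, w ⬝ᵥ (x - c) ∂Q = w ⬝ᵥ (meanv Q - c) := by
  simp only [dotProduct, Pi.sub_apply, meanv]
  rw [integral_finsetSum _ fun i _ => ?_]
  · refine Finset.sum_congr rfl fun i _ => ?_
    rw [integral_const_mul, integral_sub (hQ i) (integrable_const _), integral_const,
      probReal_univ, one_smul]
  · exact ((hQ i).sub (integrable_const _)).const_mul _

variable (μ : Fin d → ℝ) {Sg : Matrix (Fin d) (Fin d) ℝ} {S : Set (Fin d → ℝ)}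

lemma isProbabilityMeasure_truncGauss (hSg : Sg.PosDef) (hPS : gauss μ Sg S ≠ 0) :
    IsProbabilityMeasure (truncGauss μ Sg S) :=
  have := isProbabilityMeasure_gauss μ hSg
  cond_isProbabilityMeasure hPS

lemma integrable_exp_dotProduct_sub_truncGauss (hSg : Sg.PosDef) (hPS : gauss μ Sg S ≠ 0)
    (w : Fin d → ℝ) : Integrable (fun x => exp (w ⬝ᵥ (x - μ))) (truncGauss μ Sg S) :=
  (integrable_exp_dotProduct_sub_gauss μ hSg w).cond hPS

lemma integrable_dotProduct_sub_truncGauss (hSg : Sg.PosDef) (hPS : gauss μ Sg S ≠ 0)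
    (w : Fin d → ℝ) : Integrable (fun x => w ⬝ᵥ (x - μ)) (truncGauss μ Sg S) := by
  simpa only [pow_one] using integrable_pow_of_integrable_exp_mul one_ne_zero
    (by simpa only [one_mul] using integrable_exp_dotProduct_sub_truncGauss μ hSg hPS w)
    (by simpa only [neg_mul, one_mul, ← neg_dotProduct] using
      integrable_exp_dotProduct_sub_truncGauss μ hSg hPS (-w)) 1

lemma integrable_apply_truncGauss (hSg : Sg.PosDef) (hPS : gauss μ Sg S ≠ 0) (i : Fin d) :
    Integrable (fun x => x i) (truncGauss μ Sg S) := by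
  have := isProbabilityMeasure_truncGauss μ hSg hPS
  have h := integrable_dotProduct_sub_truncGauss μ hSg hPS (Pi.single i 1)
  simp only [single_one_dotProduct, Pi.sub_apply] at h
  exact (h.add (integrable_const (μ i))).congr (.of_forall fun x => sub_add_cancel (x i) (μ i))

lemma dotProduct_meanv_truncGauss_sub_le (hSg : Sg.PosDef) {α : ℝ} (hα : 0 < α)
    (hmass : ENNReal.ofReal α ≤ gauss μ Sg S) (w : Fin d → ℝ) :
    w ⬝ᵥ (meanv (truncGauss μ Sg S) - μ) ≤ w ⬝ᵥ (Sg *ᵥ w) / 2 + log (1 / α) := by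
  have hPS : gauss μ Sg S ≠ 0 := ((ENNReal.ofReal_pos.mpr hα).trans_le hmass).ne'
  have := isProbabilityMeasure_gauss μ hSg
  have := isProbabilityMeasure_truncGauss μ hSg hPS
  have hjensen :
      exp (w ⬝ᵥ (meanv (truncGauss μ Sg S) - μ)) ≤ α⁻¹ * exp (w ⬝ᵥ (Sg *ᵥ w) / 2) := by
    rw [← integral_dotProduct_sub_eq_dotProduct_meanv_sub (integrable_apply_truncGauss μ hSg hPS),
      ← integral_exp_dotProduct_sub_gauss μ hSg w]
    exact exp_integral_cond_le (P := gauss μ Sg) hα hmass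
      (integrable_dotProduct_sub_truncGauss μ hSg hPS w)
      (integrable_exp_dotProduct_sub_gauss μ hSg w)
  calc w ⬝ᵥ (meanv (truncGauss μ Sg S) - μ)
      ≤ log (α⁻¹ * exp (w ⬝ᵥ (Sg *ᵥ w) / 2)) := (le_log_iff_exp_le (by positivity)).mpr hjensen
    _ = w ⬝ᵥ (Sg *ᵥ w) / 2 + log (1 / α) := by
      rw [log_mul (inv_ne_zero hα.ne') (exp_pos _).ne', log_exp, one_div, add_comm]

end TruncGauss

theorem statement10_general {d : ℕ} (μ : Fin d → ℝ) (Sg : Matrix (Fin d) (Fin d) ℝ)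
    (hSg : Sg.PosDef) (S : Set (Fin d → ℝ))
    (α : ℝ) (h0 : 0 < α)
    (hmass : ENNReal.ofReal α ≤ gauss μ Sg S) :
    Real.sqrt ((meanv (truncGauss μ Sg S) - μ) ⬝ᵥ
        (Sg⁻¹ *ᵥ (meanv (truncGauss μ Sg S) - μ))) ≤
      Real.sqrt (2 * Real.log (1 / α)) + 1 := by
  have hmahalanobis := dotProduct_inv_mulVec_le_of_forall_dotProduct_le hSg.det_pos.ne'.isUnit
    (dotProduct_meanv_truncGauss_sub_le μ hSg h0 hmass)
  linarith [Real.sqrt_le_sqrt hmahalanobis]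

/-- If `N(μ,Σ;S) ≥ α` with `α ∈ (0,1]`, then the mean `μ_S` of the
truncated normal `N(μ,Σ,S)` satisfies `‖μ_S − μ‖_Σ ≤ √(2 log(1/α)) + 1`, where
`‖x‖_Σ = √(xᵀΣ⁻¹x)` is the Mahalanobis norm. -/
theorem statement10 {d : ℕ} (μ : Fin d → ℝ) (Sg : Matrix (Fin d) (Fin d) ℝ)
    (hSg : Sg.PosDef) (S : Set (Fin d → ℝ)) (hS : MeasurableSet S)
    (α : ℝ) (h0 : 0 < α) (h1 : α ≤ 1)
    (hmass : ENNReal.ofReal α ≤ gauss μ Sg S) :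
    Real.sqrt ((meanv (truncGauss μ Sg S) - μ) ⬝ᵥ
        (Sg⁻¹ *ᵥ (meanv (truncGauss μ Sg S) - μ))) ≤
      Real.sqrt (2 * Real.log (1 / α)) + 1 :=
  statement10_general μ Sg hSg S α h0 hmass

end
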